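/- Let n, N be positive integers, let E ∈ ℝ^{n×N}, let d̃ ∈ ℝ^n with ‖d̃‖₂ = 1, and let λ > 0, L > 0. Suppose c ∈ ℝ^N is a global minimizer of c' ↦ ‖E − d̃ (c')ᵀ‖_F² + λ² ‖c'‖₀ over the set {c' ∈ ℝ^N : ‖c'‖_∞ ≤ L}. If Ec = 0, then c = 0. -/

import Mathlib

/-! Since `E c = 0` and `‖d̃‖₂ = 1`, the fit term splits as `‖E - d̃ cᵀ‖_F² = ‖E‖_F² + ‖c‖₂²`.
Comparing the objective at `c` with its value `‖E‖_F²` at the feasible point `0` leaves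
`‖c‖₂² + λ² ‖c‖₀ ≤ 0`, which forces `c = 0`. -/

open Finset Matrix

noncomputable def frobSq {n N : ℕ} (M : Matrix (Fin n) (Fin N) ℝ) : ℝ :=
  ∑ i, ∑ j, (M i j) ^ 2

noncomputable def l0 {N : ℕ} (c : Fin N → ℝ) : ℕ :=
  (Finset.univ.filter (fun i => c i ≠ 0)).card

noncomputable def outer {n N : ℕ} (d : Fin n → ℝ) (c : Fin N → ℝ) :
    Matrix (Fin n) (Fin N) ℝ :=
  Matrix.of fun i j => d i * c j

section

variable {n N : ℕ}

@[simp]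
lemma outer_zero_right (d : Fin n → ℝ) : outer d (0 : Fin N → ℝ) = 0 := by
  ext i j
  simp [outer]

@[simp]
lemma l0_zero : l0 (0 : Fin N → ℝ) = 0 := by
  simp [l0]

lemma frobSq_sub_outer (E : Matrix (Fin n) (Fin N) ℝ) (d : Fin n → ℝ) (c : Fin N → ℝ) :
    frobSq (E - outer d c) = frobSq E - 2 * d ⬝ᵥ (E *ᵥ c) + (d ⬝ᵥ d) * (c ⬝ᵥ c) := by
  simp only [frobSq, dotProduct]
  rw [Finset.sum_mul_sum]
  simp only [dotProduct, mulVec, Finset.mul_sum, ← Finset.sum_sub_distrib,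
    ← Finset.sum_add_distrib, Matrix.sub_apply, outer, of_apply]
  refine Finset.sum_congr rfl fun i _ => Finset.sum_congr rfl fun j _ => ?_
  ring

lemma frobSq_sub_outer_of_mulVec_eq_zero (E : Matrix (Fin n) (Fin N) ℝ) {d : Fin n → ℝ}
    (hd : d ⬝ᵥ d = 1) {c : Fin N → ℝ} (hEc : E *ᵥ c = 0) :
    frobSq (E - outer d c) = frobSq E + c ⬝ᵥ c := by
  rw [frobSq_sub_outer, hEc, hd, dotProduct_zero]
  ring

end

theorem stmt9_general {n N : ℕ}
    (E : Matrix (Fin n) (Fin N) ℝ) (dtil : Fin n → ℝ)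
    (hd : Real.sqrt (∑ i, (dtil i) ^ 2) = 1)
    (lam L : ℝ) (hL : 0 < L)
    (c : Fin N → ℝ)
    (hmin : ∀ c' : Fin N → ℝ, (∀ i, |c' i| ≤ L) →
      frobSq (E - outer dtil c) + lam ^ 2 * (l0 c : ℝ) ≤
      frobSq (E - outer dtil c') + lam ^ 2 * (l0 c' : ℝ))
    (hEc : E.mulVec c = 0) :
    c = 0 := by
  have hdd : dtil ⬝ᵥ dtil = 1 := by
    simpa [dotProduct, sq] using Real.sqrt_eq_one.mp hd
  have hcmp := hmin 0 fun _ => by simpa using hL.le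
  rw [frobSq_sub_outer_of_mulVec_eq_zero E hdd hEc] at hcmp
  simp only [outer_zero_right, sub_zero, l0_zero, Nat.cast_zero, mul_zero, add_zero] at hcmp
  have hl0 : 0 ≤ lam ^ 2 * (l0 c : ℝ) := by positivity
  have hcc : c ⬝ᵥ c = 0 := le_antisymm (by linarith) (dotProduct_self_star_nonneg c)
  exact dotProduct_self_eq_zero.mp hcc

theorem stmt9 {n N : ℕ} (hn : 0 < n) (hN : 0 < N)
    (E : Matrix (Fin n) (Fin N) ℝ) (dtil : Fin n → ℝ)
    (hd : Real.sqrt (∑ i, (dtil i) ^ 2) = 1)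
    (lam L : ℝ) (hlam : 0 < lam) (hL : 0 < L)
    (c : Fin N → ℝ) (hcL : ∀ i, |c i| ≤ L)
    (hmin : ∀ c' : Fin N → ℝ, (∀ i, |c' i| ≤ L) →
      frobSq (E - outer dtil c) + lam ^ 2 * (l0 c : ℝ) ≤
      frobSq (E - outer dtil c') + lam ^ 2 * (l0 c' : ℝ))
    (hEc : E.mulVec c = 0) :
    c = 0 :=
  stmt9_general E dtil hd lam L hL c hmin hEc
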